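/- Let P be a finite set of points in ℝ² with diameter D > 0 attained by points p₁, p₂ ∈ P, let u = (p₁ − p₂)/D, and let w = w_{u⊥}(P) be the extent of P perpendicular to the diametrical pair. Then for every unit vector v ∈ ℝ²: w_v(P) ≥ D · sin(½·arcsin(w/D)). In particular, the width of the thinnest strip covering P is at least D·sin(½·arcsin(w/D)). -/

import Mathlib

/-!
Write `θ = ½·arcsin(w/D)` and split a unit vector as `v = c·u + s·u⊥`. The diametral pair
gives extent `D·|c|` along `v`. A pair `q, q'` realising `w` has `q − q' = a·u + w·u⊥` with
`a² + w² ≤ D²`, so it gives extent `|a·c + w·s|`. If `|c| ≥ sin θ` the first bound suffices;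
otherwise `|s| ≥ cos θ` and
`|a·c + w·s| ≥ w·cos θ − |a|·sin θ ≥ D·(sin 2θ·cos θ − cos 2θ·sin θ) = D·sin θ`.
-/

open Real
open scoped RealInnerProductSpace

noncomputable section

/-- The point of `ℝ²` with coordinates `a`, `b`. -/
def pt (a b : ℝ) : EuclideanSpace ℝ (Fin 2) :=
  (WithLp.equiv 2 (Fin 2 → ℝ)).symm ![a, b]

/-- `v` rotated counterclockwise by `π/2`. -/
def perp (v : EuclideanSpace ℝ (Fin 2)) : EuclideanSpace ℝ (Fin 2) :=
  pt (-(v 1)) (v 0)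

/-- The extent of a point set `P` along a vector `v`: `max_{p,q ∈ P} ⟨p − q, v⟩`. -/
def wext (v : EuclideanSpace ℝ (Fin 2)) (P : Set (EuclideanSpace ℝ (Fin 2))) : ℝ :=
  sSup {x : ℝ | ∃ p ∈ P, ∃ q ∈ P, x = ⟪p - q, v⟫}

lemma real_inner_eq_fin_two (x y : EuclideanSpace ℝ (Fin 2)) :
    ⟪x, y⟫ = x 0 * y 0 + x 1 * y 1 := by
  simp only [PiLp.inner_apply, Fin.sum_univ_two, RCLike.inner_apply, conj_trivial]
  ring

lemma perp_apply_zero (v : EuclideanSpace ℝ (Fin 2)) : perp v 0 = -(v 1) := by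
  simp [perp, pt]

lemma perp_apply_one (v : EuclideanSpace ℝ (Fin 2)) : perp v 1 = v 0 := by
  simp [perp, pt]

lemma real_inner_eq_inner_mul_inner_add_perp {u : EuclideanSpace ℝ (Fin 2)} (hu : ‖u‖ = 1)
    (x y : EuclideanSpace ℝ (Fin 2)) :
    ⟪x, y⟫ = ⟪x, u⟫ * ⟪u, y⟫ + ⟪x, perp u⟫ * ⟪perp u, y⟫ := by
  have hu2 := real_inner_self_eq_norm_sq u
  rw [hu, real_inner_eq_fin_two] at hu2
  simp only [real_inner_eq_fin_two, perp_apply_zero, perp_apply_one]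
  linear_combination (-(x 0 * y 0) - x 1 * y 1) * hu2

lemma inner_sq_add_inner_perp_sq {u : EuclideanSpace ℝ (Fin 2)} (hu : ‖u‖ = 1)
    (x : EuclideanSpace ℝ (Fin 2)) : ⟪x, u⟫ ^ 2 + ⟪x, perp u⟫ ^ 2 = ‖x‖ ^ 2 := by
  rw [← real_inner_self_eq_norm_sq, real_inner_eq_inner_mul_inner_add_perp hu x x,
    real_inner_comm x u, real_inner_comm x (perp u)]
  ring

section Extent

variable {P : Set (EuclideanSpace ℝ (Fin 2))}

lemma finite_inner_sub_set (hP : P.Finite) (v : EuclideanSpace ℝ (Fin 2)) :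
    {x : ℝ | ∃ p ∈ P, ∃ q ∈ P, x = ⟪p - q, v⟫}.Finite := by
  convert hP.image2 (fun p q => ⟪p - q, v⟫) hP using 1
  ext x
  simp only [Set.mem_ofPred_eq, Set.mem_image2, eq_comm]

lemma inner_sub_le_wext (hP : P.Finite) {p q : EuclideanSpace ℝ (Fin 2)} (hp : p ∈ P)
    (hq : q ∈ P) (v : EuclideanSpace ℝ (Fin 2)) : ⟪p - q, v⟫ ≤ wext v P :=
  le_csSup (finite_inner_sub_set hP v).bddAbove ⟨p, hp, q, hq, rfl⟩

lemma abs_inner_sub_le_wext (hP : P.Finite) {p q : EuclideanSpace ℝ (Fin 2)} (hp : p ∈ P)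
    (hq : q ∈ P) (v : EuclideanSpace ℝ (Fin 2)) : |⟪p - q, v⟫| ≤ wext v P := by
  refine abs_le'.2 ⟨inner_sub_le_wext hP hp hq v, ?_⟩
  rw [← inner_neg_left, neg_sub]
  exact inner_sub_le_wext hP hq hp v

lemma exists_inner_sub_eq_wext (hP : P.Finite) (hne : P.Nonempty)
    (v : EuclideanSpace ℝ (Fin 2)) : ∃ p ∈ P, ∃ q ∈ P, wext v P = ⟪p - q, v⟫ := by
  obtain ⟨p, hp⟩ := hne
  refine Set.Nonempty.csSup_mem ?_ (finite_inner_sub_set hP v)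
  exact ⟨_, p, hp, p, hp, rfl⟩

end Extent

lemma mul_sin_half_le_max {D α a c s : ℝ} (hD : 0 ≤ D) (hα₀ : 0 ≤ α) (hαπ : α ≤ π)
    (ha : |a| ≤ D * cos α) (hcs : c ^ 2 + s ^ 2 = 1) :
    D * sin (α / 2) ≤ max (D * |c|) |a * c + D * sin α * s| := by
  have hcos : 0 ≤ cos (α / 2) := cos_nonneg_of_mem_Icc ⟨by linarith, by linarith⟩
  rcases le_or_gt (sin (α / 2)) |c| with hc | hc
  · exact le_max_of_le_left (mul_le_mul_of_nonneg_left hc hD)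
  refine le_max_of_le_right ?_
  have hs : cos (α / 2) ≤ |s| := by
    refine (sq_le_sq₀ hcos (abs_nonneg s)).1 ?_
    nlinarith [sin_sq_add_cos_sq (α / 2), sq_abs c, sq_abs s, abs_nonneg c]
  have hDsin : 0 ≤ D * sin α := mul_nonneg hD (sin_nonneg_of_nonneg_of_le_pi hα₀ hαπ)
  have hsub : sin (α / 2) = sin α * cos (α / 2) - cos α * sin (α / 2) := by
    rw [← sin_sub, sub_half]
  calc D * sin (α / 2)
      = D * sin α * cos (α / 2) - D * cos α * sin (α / 2) := by
        linear_combination D * hsub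
    _ ≤ D * sin α * |s| - |a| * |c| := by gcongr; exact (abs_nonneg a).trans ha
    _ = |D * sin α * s| - |a * c| := by
        rw [abs_mul (D * sin α), abs_mul a, abs_of_nonneg hDsin]
    _ ≤ |a * c + D * sin α * s| := by
        simpa [add_comm] using abs_sub_abs_le_abs_sub (D * sin α * s) (-(a * c))

lemma mul_sin_half_arcsin_le_max {D w a c s : ℝ} (hD : 0 < D) (hw : 0 ≤ w)
    (h : a ^ 2 + w ^ 2 ≤ D ^ 2) (hcs : c ^ 2 + s ^ 2 = 1) :
    D * sin (arcsin (w / D) / 2) ≤ max (D * |c|) |a * c + w * s| := by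
  have hz₀ : 0 ≤ w / D := div_nonneg hw hD.le
  have hz₁ : w / D ≤ 1 := (div_le_one hD).2 ((sq_le_sq₀ hw hD.le).1 (by nlinarith))
  have hsin_arcsin : sin (arcsin (w / D)) = w / D := sin_arcsin (by linarith) hz₁
  have hsin : D * sin (arcsin (w / D)) = w := by rw [hsin_arcsin, mul_div_cancel₀ _ hD.ne']
  have ha : |a| ≤ D * cos (arcsin (w / D)) := by
    refine abs_le_of_sq_le_sq ?_ (mul_nonneg hD.le (cos_arcsin_nonneg _))
    rw [mul_pow, cos_sq', hsin_arcsin, div_pow, mul_sub, mul_div_cancel₀ _ (by positivity)]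
    linarith
  simpa [hsin] using mul_sin_half_le_max hD.le (arcsin_nonneg.2 hz₀)
    ((arcsin_le_pi_div_two _).trans (by linarith [pi_pos])) ha hcs

/-- If a finite point set `P` has diameter `D` attained by `p₁, p₂`, `u` is the
diametrical direction, and `w` is the extent of `P` perpendicular to `u`, then the
extent of `P` along any unit vector `v` is at least `D·sin(½·arcsin(w/D))`. -/
theorem stmt_10 (P : Set (EuclideanSpace ℝ (Fin 2))) (hfin : P.Finite)
    (D : ℝ) (hD : 0 < D)
    (p₁ p₂ : EuclideanSpace ℝ (Fin 2)) (hp₁ : p₁ ∈ P) (hp₂ : p₂ ∈ P)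
    (hdiam : ∀ p ∈ P, ∀ q ∈ P, dist p q ≤ D) (hattain : dist p₁ p₂ = D)
    (u : EuclideanSpace ℝ (Fin 2)) (hu : u = D⁻¹ • (p₁ - p₂))
    (w : ℝ) (hw : w = wext (perp u) P) :
    ∀ v : EuclideanSpace ℝ (Fin 2), ‖v‖ = 1 →
      wext v P ≥ D * Real.sin (1/2 * Real.arcsin (w / D)) := by
  intro v hv
  have hu₁ : ‖u‖ = 1 := by
    rw [hu, norm_smul, ← dist_eq_norm, hattain, norm_inv, norm_of_nonneg hD.le,
      inv_mul_cancel₀ hD.ne']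
  have hp₁₂ : p₁ - p₂ = D • u := by rw [hu, smul_smul, mul_inv_cancel₀ hD.ne', one_smul]
  obtain ⟨q, hq, q', hq', hwq⟩ := exists_inner_sub_eq_wext hfin ⟨p₁, hp₁⟩ (perp u)
  rw [← hw] at hwq
  have hw₀ : 0 ≤ w := by
    rw [hw]
    exact (abs_nonneg _).trans (abs_inner_sub_le_wext hfin hp₁ hp₁ _)
  have hqq' : ⟪q - q', u⟫ ^ 2 + w ^ 2 ≤ D ^ 2 := by
    rw [hwq, inner_sq_add_inner_perp_sq hu₁, ← dist_eq_norm]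
    exact pow_le_pow_left₀ dist_nonneg (hdiam q hq q' hq') 2
  have hcs : ⟪u, v⟫ ^ 2 + ⟪perp u, v⟫ ^ 2 = 1 := by
    rw [real_inner_comm v u, real_inner_comm v (perp u), inner_sq_add_inner_perp_sq hu₁, hv,
      one_pow]
  have h₁ : D * |⟪u, v⟫| ≤ wext v P := by
    have h := abs_inner_sub_le_wext hfin hp₁ hp₂ v
    rwa [hp₁₂, real_inner_smul_left, abs_mul, abs_of_pos hD] at h
  have h₂ : |⟪q - q', u⟫ * ⟪u, v⟫ + w * ⟪perp u, v⟫| ≤ wext v P := by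
    rw [hwq, ← real_inner_eq_inner_mul_inner_add_perp hu₁]
    exact abs_inner_sub_le_wext hfin hq hq' v
  calc D * sin (1 / 2 * arcsin (w / D)) = D * sin (arcsin (w / D) / 2) := by
        rw [one_div_mul_eq_div]
    _ ≤ max (D * |⟪u, v⟫|) |⟪q - q', u⟫ * ⟪u, v⟫ + w * ⟪perp u, v⟫| :=
        mul_sin_half_arcsin_le_max hD hw₀ hqq' hcs
    _ ≤ wext v P := max_le h₁ h₂

end
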